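/- Let w₁, w₂ be positive C² functions on an open set Ω ⊆ ℝⁿ, and for a positive C² function w define the matrix-valued function A_w := ∇²w − (|∇w|²/(2w))·I. Then at every point of Ω, the matrix A_{(w₁+w₂)/2} − ½(A_{w₁} + A_{w₂}) is positive semidefinite. -/

import Mathlib

open Real

/-- Quadratic form of the matrix `A_w = ∇²w − (|∇w|²/(2w))·I` applied to `v`. -/
noncomputable def conformalHessianForm {n : ℕ}
    (w : EuclideanSpace ℝ (Fin n) → ℝ) (x v : EuclideanSpace ℝ (Fin n)) : ℝ :=
  iteratedFDeriv ℝ 2 w x ![v, v] - ‖gradient w x‖ ^ 2 / (2 * w x) * ‖v‖ ^ 2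

/-!
The Hessian part of `A_w` is linear in `w`, so only the gradient terms survive in the difference:
with `a = ∇w₁`, `b = ∇w₂`, `s = w₁`, `t = w₂` it is `(|a|²/s + |b|²/t − |a + b|²/(s + t))/4 · |v|²`.
This is nonnegative by the triangle inequality and Sedrakyan's form of Cauchy–Schwarz, i.e. by
joint convexity of the perspective function `(g, s) ↦ |g|²/s`.
-/

theorem norm_add_sq_div_add_le {E : Type*} [SeminormedAddCommGroup E] (u v : E) {s t : ℝ}
    (hs : 0 < s) (ht : 0 < t) : ‖u + v‖ ^ 2 / (s + t) ≤ ‖u‖ ^ 2 / s + ‖v‖ ^ 2 / t := by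
  have h := Finset.sq_sum_div_le_sum_sq_div Finset.univ ![‖u‖, ‖v‖] (g := ![s, t])
    (by simp [Fin.forall_fin_two, hs, ht])
  simp only [Fin.sum_univ_two, Matrix.cons_val_zero, Matrix.cons_val_one] at h
  calc ‖u + v‖ ^ 2 / (s + t) ≤ (‖u‖ + ‖v‖) ^ 2 / (s + t) := by
        gcongr; exact norm_add_le u v
    _ ≤ _ := h

theorem fun_add_div_two_eq_smul {α : Type*} (f g : α → ℝ) :
    (fun y => (f y + g y) / 2) = (2 : ℝ)⁻¹ • (f + g) := by
  funext y
  simp only [Pi.smul_apply, Pi.add_apply, smul_eq_mul]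
  ring

section AddDivTwo

variable {E : Type*} [NormedAddCommGroup E] [NormedSpace ℝ E] {f g : E → ℝ} {x : E}

theorem iteratedFDeriv_add_div_two_apply {i : ℕ} (hf : ContDiffAt ℝ i f x)
    (hg : ContDiffAt ℝ i g x) :
    iteratedFDeriv ℝ i (fun y => (f y + g y) / 2) x
      = (2 : ℝ)⁻¹ • (iteratedFDeriv ℝ i f x + iteratedFDeriv ℝ i g x) := by
  rw [fun_add_div_two_eq_smul, iteratedFDeriv_const_smul_apply (f := f + g) (hf.add hg),
    iteratedFDeriv_add_apply hf hg]

end AddDivTwo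

section Gradient

variable {F : Type*} [NormedAddCommGroup F] [InnerProductSpace ℝ F] [CompleteSpace F]
  {f g : F → ℝ} {x : F}

theorem gradient_add_div_two (hf : DifferentiableAt ℝ f x) (hg : DifferentiableAt ℝ g x) :
    gradient (fun y => (f y + g y) / 2) x = (2 : ℝ)⁻¹ • (gradient f x + gradient g x) := by
  apply HasGradientAt.gradient
  rw [fun_add_div_two_eq_smul, hasGradientAt_iff_hasFDerivAt, map_smul, map_add, gradient,
    gradient, LinearIsometryEquiv.apply_symm_apply, LinearIsometryEquiv.apply_symm_apply]
  exact (HasFDerivAt.add hf.hasFDerivAt hg.hasFDerivAt).const_smul (2 : ℝ)⁻¹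

end Gradient

section ConformalHessian

variable {n : ℕ} {f g : EuclideanSpace ℝ (Fin n) → ℝ} {x : EuclideanSpace ℝ (Fin n)}

theorem conformalHessianForm_add_div_two_sub (hf : ContDiffAt ℝ 2 f x) (hg : ContDiffAt ℝ 2 g x)
    (v : EuclideanSpace ℝ (Fin n)) :
    conformalHessianForm (fun y => (f y + g y) / 2) x v
        - (conformalHessianForm f x v + conformalHessianForm g x v) / 2
      = (‖gradient f x‖ ^ 2 / f x + ‖gradient g x‖ ^ 2 / g x
          - ‖gradient f x + gradient g x‖ ^ 2 / (f x + g x)) / 4 * ‖v‖ ^ 2 := by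
  simp only [conformalHessianForm, iteratedFDeriv_add_div_two_apply (i := 2) hf hg,
    gradient_add_div_two (hf.differentiableAt two_ne_zero) (hg.differentiableAt two_ne_zero),
    norm_smul, smul_apply, add_apply, smul_eq_mul, norm_inv, Real.norm_ofNat]
  ring

theorem conformalHessianForm_add_div_two_sub_nonneg (hf : ContDiffAt ℝ 2 f x)
    (hg : ContDiffAt ℝ 2 g x) (hfx : 0 < f x) (hgx : 0 < g x) (v : EuclideanSpace ℝ (Fin n)) :
    0 ≤ conformalHessianForm (fun y => (f y + g y) / 2) x v
        - (conformalHessianForm f x v + conformalHessianForm g x v) / 2 := by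
  rw [conformalHessianForm_add_div_two_sub hf hg]
  have key := norm_add_sq_div_add_le (gradient f x) (gradient g x) hfx hgx
  exact mul_nonneg (div_nonneg (sub_nonneg.2 key) zero_le_four) (sq_nonneg _)

end ConformalHessian

/-- Convexity of the conformal Hessian: at every point of `Ω`, the matrix
`A_{(w₁+w₂)/2} − ½(A_{w₁} + A_{w₂})` is positive semidefinite. -/
theorem stmt_0 {n : ℕ} (Ω : Set (EuclideanSpace ℝ (Fin n))) (hΩ : IsOpen Ω)
    (w₁ w₂ : EuclideanSpace ℝ (Fin n) → ℝ)
    (hw₁ : ContDiffOn ℝ 2 w₁ Ω) (hw₂ : ContDiffOn ℝ 2 w₂ Ω)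
    (hw₁pos : ∀ x ∈ Ω, 0 < w₁ x) (hw₂pos : ∀ x ∈ Ω, 0 < w₂ x) :
    ∀ x ∈ Ω, ∀ v : EuclideanSpace ℝ (Fin n),
      0 ≤ conformalHessianForm (fun y => (w₁ y + w₂ y) / 2) x v
          - (conformalHessianForm w₁ x v + conformalHessianForm w₂ x v) / 2 := by
  intro x hx v
  have hΩx := hΩ.mem_nhds hx
  exact conformalHessianForm_add_div_two_sub_nonneg (hw₁.contDiffAt hΩx) (hw₂.contDiffAt hΩx)
    (hw₁pos x hx) (hw₂pos x hx) v
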